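/- Let d ≥ 2 be an integer and let α < −2/(d−1). For λ > 0 set u_λ = (d κ_d)^{−1/(d−1)} λ^{1/(d−1)} and h_λ = 2 λ^α u_λ² / (1 + λ^α). Then for every fixed h' ∈ (0,1), lim_{λ → ∞} h_λ · φ_{λ,α,u_λ}(h_λ · h') = (2^d κ_{d−1} / κ_d) · ( h'(1−h') )^{(d−1)/2}. -/

import Mathlib

/-!
Write `a = λ^α`, which tends to `0⁺` because `α < 0`. Since `u_λ^{d-1} = λ/(dκ_d)`, for small `a`
the product `h_λ φ_{λ,α,u_λ}(h_λ h')` equals `2d (1 + (1-2h')a)^{d-1} s₁(g)/a^{d-1}` with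
`g = 2h'(1-h')a²/(1 + (1-2h')a) ∈ [0,2]`. As `t → 0⁺` the cap angle `θ = arccos(1-t)` satisfies
`t = 1 - cos θ ~ θ²/2` and `∫₀^θ sin^{d-2} ~ θ^{d-1}/(d-1)`, so
`s₁(t) ~ 2^{(d-1)/2} κ_{d-1}/(dκ_d) · t^{(d-1)/2}`. Because `g ~ 2h'(1-h')a²`, the powers of `a`
cancel and the limit is `2^d κ_{d-1}/κ_d · (h'(1-h'))^{(d-1)/2}`.
-/

open MeasureTheory Real Filter

/-- `kappa j` is the Lebesgue volume of the unit ball in `ℝ^j`. -/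
noncomputable def kappa (j : ℕ) : ℝ :=
  (volume (Metric.ball (0 : EuclideanSpace ℝ (Fin j)) 1)).toReal

/-- Normalized surface area `s₁` of a spherical cap of height `h` (equals `1` for `h > 2`). -/
noncomputable def s1 (d : ℕ) (h : ℝ) : ℝ :=
  if h ≤ 2 then
    (((d : ℝ) - 1) * kappa (d - 1) / ((d : ℝ) * kappa d)) *
      ∫ θ in (0:ℝ)..(Real.arccos (1 - h)), (Real.sin θ) ^ (d - 2)
  else 1

/-- The function `g_{λ,α,u}(h)`. -/
noncomputable def gfun (lam al u h : ℝ) : ℝ :=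
  min (max ((lam ^ al / u ^ 2 * h - (1 / 2) * (1 + lam ^ al) / u ^ 4 * h ^ 2) /
      (1 - h / u ^ 2)) 0) 2

/-- The density `φ_{λ,α,u}(h)`. -/
noncomputable def phi (d : ℕ) (lam al u h : ℝ) : ℝ :=
  lam * (1 + lam ^ al) ^ d / u ^ (d + 1) / (kappa d * lam ^ ((d : ℝ) * al)) *
    s1 d (gfun lam al u h) * (1 - h / u ^ 2) ^ (d - 1)

/-- The scaling factor `u_λ = (d κ_d)^{-1/(d-1)} λ^{1/(d-1)}` for `α < -2/(d-1)`. -/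
noncomputable def uSub (d : ℕ) (lam : ℝ) : ℝ :=
  ((d : ℝ) * kappa d) ^ (-(1 : ℝ) / ((d : ℝ) - 1)) * lam ^ ((1 : ℝ) / ((d : ℝ) - 1))

/-- The maximal height `h_λ = 2 λ^α u_λ² / (1 + λ^α)`. -/
noncomputable def hSub (d : ℕ) (al lam : ℝ) : ℝ :=
  2 * lam ^ al * uSub d lam ^ 2 / (1 + lam ^ al)

open scoped Topology

lemma kappa_pos (j : ℕ) : 0 < kappa j :=
  ENNReal.toReal_pos (Metric.measure_ball_pos volume 0 one_pos).ne' measure_ball_lt_top.ne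

lemma sq_rpow_natCast_div_two {x : ℝ} (hx : 0 ≤ x) (n : ℕ) : (x ^ 2) ^ ((n : ℝ) / 2) = x ^ n := by
  rw [← rpow_natCast x 2, ← rpow_mul hx, ← rpow_natCast]
  push_cast
  ring_nf

lemma tendsto_integral_sin_pow_div_pow (k : ℕ) :
    Tendsto (fun θ : ℝ => (∫ x in (0 : ℝ)..θ, sin x ^ k) / θ ^ (k + 1)) (𝓝[>] 0)
      (𝓝 (1 / (k + 1))) := by
  have hcont : Continuous fun x : ℝ => sin x ^ k := by fun_prop
  have hprim : Continuous fun θ : ℝ => ∫ x in (0 : ℝ)..θ, sin x ^ k :=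
    intervalIntegral.continuous_primitive (fun _ _ => hcont.intervalIntegrable _ _) 0
  have hsinc : Tendsto (fun θ : ℝ => sinc θ ^ k / (k + 1)) (𝓝 0) (𝓝 (1 / (k + 1))) := by
    simpa using ((continuous_sinc.pow k).div_const ((k : ℝ) + 1)).tendsto 0
  refine HasDerivAt.lhopital_zero_nhdsGT (f' := fun θ => sin θ ^ k)
    (g' := fun θ => (k + 1) * θ ^ k) ?_ ?_ ?_ ?_ ?_ ?_
  · exact .of_forall fun θ => intervalIntegral.integral_hasDerivAt_right
      (hcont.intervalIntegrable _ _) (hcont.stronglyMeasurableAtFilter _ _) hcont.continuousAt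
  · exact .of_forall fun θ => by simpa using hasDerivAt_pow (k + 1) θ
  · filter_upwards [self_mem_nhdsWithin] with θ (hθ : 0 < θ)
    positivity
  · simpa using (hprim.tendsto 0).mono_left nhdsWithin_le_nhds
  · simpa using ((continuous_pow (k + 1)).tendsto (0 : ℝ)).mono_left nhdsWithin_le_nhds
  · refine (hsinc.mono_left nhdsWithin_le_nhds).congr' ?_
    filter_upwards [self_mem_nhdsWithin] with θ (hθ : 0 < θ)
    rw [sinc_of_ne_zero hθ.ne', div_pow, div_div, mul_comm]

-- Also true where `sin (θ / 2) = 0`: both sides are then `0` by division by zero.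
lemma sq_div_one_sub_cos_eq {θ : ℝ} (hθ : θ ≠ 0) : θ ^ 2 / (1 - cos θ) = 2 / sinc (θ / 2) ^ 2 := by
  have hcos : 1 - cos θ = 2 * sin (θ / 2) ^ 2 := by
    rw [sin_sq_eq_half_sub]
    ring_nf
  rw [hcos, sinc_of_ne_zero (div_ne_zero hθ two_ne_zero), div_pow, div_div_eq_mul_div]
  ring

lemma tendsto_sq_div_one_sub_cos : Tendsto (fun θ : ℝ => θ ^ 2 / (1 - cos θ)) (𝓝[≠] 0) (𝓝 2) := by
  have hsinc : Tendsto (fun θ : ℝ => sinc (θ / 2) ^ 2) (𝓝 0) (𝓝 1) := by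
    have : Continuous fun θ : ℝ => sinc (θ / 2) ^ 2 :=
      (continuous_sinc.comp (continuous_id.div_const 2)).pow 2
    simpa using this.tendsto 0
  have h := (tendsto_const_nhds (x := (2 : ℝ))).div hsinc one_ne_zero
  rw [div_one] at h
  exact (h.mono_left nhdsWithin_le_nhds).congr'
    (eventually_nhdsWithin_of_forall fun θ hθ => (sq_div_one_sub_cos_eq hθ).symm)

lemma tendsto_integral_sin_pow_div_one_sub_cos_rpow (k : ℕ) :
    Tendsto (fun θ : ℝ => (∫ x in (0 : ℝ)..θ, sin x ^ k) / (1 - cos θ) ^ (((k : ℝ) + 1) / 2))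
      (𝓝[>] 0) (𝓝 (2 ^ (((k : ℝ) + 1) / 2) / (k + 1))) := by
  set p : ℝ := ((k : ℝ) + 1) / 2
  have h := (tendsto_integral_sin_pow_div_pow k).mul
    ((continuousAt_rpow_const 2 p (Or.inl two_ne_zero)).tendsto.comp
      (tendsto_sq_div_one_sub_cos.mono_left (nhdsWithin_mono 0 fun _ h => ne_of_gt h)))
  rw [one_div_mul_eq_div] at h
  refine h.congr' ?_
  filter_upwards [self_mem_nhdsWithin] with θ (hθ : 0 < θ)
  have hp : p = ((k + 1 : ℕ) : ℝ) / 2 := by push_cast; rfl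
  simp only [Function.comp_apply]
  rw [div_rpow (sq_nonneg θ) (sub_nonneg.2 (cos_le_one θ)), hp,
    sq_rpow_natCast_div_two hθ.le,
    div_mul_div_cancel₀ (pow_ne_zero _ hθ.ne')]

lemma tendsto_arccos_one_sub : Tendsto (fun t : ℝ => arccos (1 - t)) (𝓝[>] 0) (𝓝[>] 0) := by
  refine tendsto_nhdsWithin_of_tendsto_nhds_of_eventually_within _ ?_ ?_
  · have : Continuous fun t : ℝ => arccos (1 - t) := by fun_prop
    simpa using (this.tendsto 0).mono_left nhdsWithin_le_nhds
  · filter_upwards [self_mem_nhdsWithin] with t (ht : 0 < t)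
    exact arccos_pos.2 (by linarith)

lemma tendsto_s1_div_rpow {d : ℕ} (hd : 2 ≤ d) :
    Tendsto (fun t => s1 d t / t ^ (((d : ℝ) - 1) / 2)) (𝓝[>] 0)
      (𝓝 (2 ^ (((d : ℝ) - 1) / 2) * kappa (d - 1) / (d * kappa d))) := by
  have hcast : ((d - 2 : ℕ) : ℝ) + 1 = d - 1 := by
    rw [Nat.cast_sub hd]
    ring
  have hd1 : (d : ℝ) - 1 ≠ 0 := by
    have : (2 : ℝ) ≤ d := by exact_mod_cast hd
    linarith
  have hdκ : (d : ℝ) * kappa d ≠ 0 := mul_ne_zero (by positivity) (kappa_pos d).ne'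
  have h := ((tendsto_integral_sin_pow_div_one_sub_cos_rpow (d - 2)).comp
    tendsto_arccos_one_sub).const_mul (((d : ℝ) - 1) * kappa (d - 1) / (d * kappa d))
  have hval : ((d : ℝ) - 1) * kappa (d - 1) / (d * kappa d) * (2 ^ (((d : ℝ) - 1) / 2) / (d - 1))
      = 2 ^ (((d : ℝ) - 1) / 2) * kappa (d - 1) / (d * kappa d) := by
    field_simp
  rw [hcast, hval] at h
  refine h.congr' ?_
  filter_upwards [Ioo_mem_nhdsGT two_pos] with t ht
  have hcos : cos (arccos (1 - t)) = 1 - t := cos_arccos (by linarith [ht.2]) (by linarith [ht.1])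
  simp only [Function.comp_apply, hcos, sub_sub_cancel, s1, if_pos ht.2.le, mul_div_assoc]

lemma tendsto_s1_comp_div_pow {d : ℕ} (hd : 2 ≤ d) {f : ℝ → ℝ} {L : ℝ} (hL : 0 < L)
    (hf : Tendsto (fun a => f a / a ^ 2) (𝓝[>] 0) (𝓝 L)) :
    Tendsto (fun a => s1 d (f a) / a ^ (d - 1)) (𝓝[>] 0)
      (𝓝 (2 ^ (((d : ℝ) - 1) / 2) * kappa (d - 1) / (d * kappa d) * L ^ (((d : ℝ) - 1) / 2))) := by
  have hp : ((d : ℝ) - 1) / 2 = ((d - 1 : ℕ) : ℝ) / 2 := by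
    rw [Nat.cast_sub (by omega : 1 ≤ d), Nat.cast_one]
  have hpos : ∀ᶠ a in 𝓝[>] (0 : ℝ), 0 < a := self_mem_nhdsWithin
  have hfpos : ∀ᶠ a in 𝓝[>] (0 : ℝ), 0 < f a := by
    filter_upwards [hf.eventually_const_lt hL, hpos] with a hfa ha
    exact (div_pos_iff_of_pos_right (pow_pos ha 2)).1 hfa
  have hf0 : Tendsto f (𝓝[>] 0) (𝓝[>] 0) := by
    refine tendsto_nhdsWithin_iff.2 ⟨?_, hfpos⟩
    have hsq : Tendsto (fun a : ℝ => a ^ 2) (𝓝[>] 0) (𝓝 0) := by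
      simpa using ((continuous_pow 2).tendsto (0 : ℝ)).mono_left nhdsWithin_le_nhds
    have h := hf.mul hsq
    rw [mul_zero] at h
    refine h.congr' ?_
    filter_upwards [hpos] with a ha
    exact div_mul_cancel₀ _ (pow_ne_zero 2 ha.ne')
  refine (((tendsto_s1_div_rpow hd).comp hf0).mul (hf.rpow_const (Or.inl hL.ne'))).congr' ?_
  filter_upwards [hpos, hfpos] with a ha hfa
  rw [Function.comp_apply, div_rpow hfa.le (sq_nonneg a), hp, sq_rpow_natCast_div_two ha.le,
    div_mul_div_cancel₀ (rpow_pos_of_pos hfa _).ne']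

/-- `g_{λ,α,u_λ}(h_λ h')` in the variable `a = λ^α`, with `c = h'(1-h')` and `b = 1-2h'`. -/
noncomputable def capHeight (c b a : ℝ) : ℝ := 2 * c * a ^ 2 / (1 + b * a)

/-- `h_λ φ_{λ,α,u_λ}(h_λ h')` in the same variables. -/
noncomputable def scaledPhi (d : ℕ) (c b a : ℝ) : ℝ :=
  2 * d * (1 + b * a) ^ (d - 1) * s1 d (capHeight c b a) / a ^ (d - 1)

lemma continuousAt_capHeight (c b : ℝ) : ContinuousAt (capHeight c b) 0 :=
  continuousAt_const.mul (continuousAt_id.pow 2) |>.div (by fun_prop) (by simp)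

lemma tendsto_capHeight_div_sq (c b : ℝ) :
    Tendsto (fun a => capHeight c b a / a ^ 2) (𝓝[>] 0) (𝓝 (2 * c)) := by
  have h : ContinuousAt (fun a : ℝ => 2 * c / (1 + b * a)) 0 :=
    continuousAt_const.div (by fun_prop) (by simp)
  have h' : Tendsto (fun a : ℝ => 2 * c / (1 + b * a)) (𝓝[>] 0) (𝓝 (2 * c)) := by
    simpa using h.tendsto.mono_left nhdsWithin_le_nhds
  refine h'.congr' ?_
  filter_upwards [self_mem_nhdsWithin] with a (ha : 0 < a)
  rw [capHeight, div_right_comm, mul_div_cancel_right₀ _ (pow_ne_zero 2 ha.ne')]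

lemma tendsto_scaledPhi {d : ℕ} (hd : 2 ≤ d) {c : ℝ} (hc : 0 < c) (b : ℝ) :
    Tendsto (scaledPhi d c b) (𝓝[>] 0)
      (𝓝 (2 ^ d * kappa (d - 1) / kappa d * c ^ (((d : ℝ) - 1) / 2))) := by
  have hfactor : Tendsto (fun a : ℝ => 2 * d * (1 + b * a) ^ (d - 1)) (𝓝[>] 0) (𝓝 (2 * d)) := by
    have h : Continuous fun a : ℝ => 2 * d * (1 + b * a) ^ (d - 1) := by fun_prop
    simpa using (h.tendsto 0).mono_left nhdsWithin_le_nhds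
  have h := hfactor.mul (tendsto_s1_comp_div_pow hd (by positivity) (tendsto_capHeight_div_sq c b))
  have hlim : 2 * (d : ℝ) * (2 ^ (((d : ℝ) - 1) / 2) * kappa (d - 1) / (d * kappa d) *
      (2 * c) ^ (((d : ℝ) - 1) / 2)) =
      2 ^ d * kappa (d - 1) / kappa d * c ^ (((d : ℝ) - 1) / 2) := by
    obtain ⟨n, rfl⟩ : ∃ n, d = n + 1 := ⟨d - 1, by omega⟩
    have hn : ((n + 1 : ℕ) : ℝ) - 1 = n := by push_cast; ring
    have hpow : (2 : ℝ) ^ ((n : ℝ) / 2) * 2 ^ ((n : ℝ) / 2) = 2 ^ n := by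
      rw [← mul_rpow zero_le_two zero_le_two, ← sq, sq_rpow_natCast_div_two zero_le_two]
    have hκ := (kappa_pos (n + 1)).ne'
    rw [hn, mul_rpow zero_le_two hc.le, Nat.add_sub_cancel, pow_succ]
    field_simp
    linear_combination kappa n * hpow
  rw [← hlim]
  exact h.congr fun a => by rw [scaledPhi, mul_div_assoc]

section Scaling

variable {d : ℕ} {lam : ℝ}

lemma uSub_pos (hd : 0 < d) (hlam : 0 < lam) : 0 < uSub d lam :=
  mul_pos (rpow_pos_of_pos (mul_pos (by positivity) (kappa_pos d)) _) (rpow_pos_of_pos hlam _)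

lemma uSub_pow_sub_one (hd : 2 ≤ d) (hlam : 0 < lam) :
    uSub d lam ^ (d - 1) = lam / (d * kappa d) := by
  have hdκ : 0 < (d : ℝ) * kappa d := mul_pos (by positivity) (kappa_pos d)
  have hd1 : (d : ℝ) - 1 ≠ 0 := by
    have : (2 : ℝ) ≤ d := by exact_mod_cast hd
    linarith
  rw [uSub, mul_pow, ← rpow_natCast, ← rpow_natCast (lam ^ _), ← rpow_mul hdκ.le,
    ← rpow_mul hlam.le, Nat.cast_sub (by omega : 1 ≤ d), Nat.cast_one,
    div_mul_cancel₀ _ hd1, div_mul_cancel₀ _ hd1, rpow_neg_one, rpow_one, inv_mul_eq_div]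

lemma hSub_div_uSub_sq (hd : 0 < d) (al : ℝ) (hlam : 0 < lam) :
    hSub d al lam / uSub d lam ^ 2 = 2 * lam ^ al / (1 + lam ^ al) := by
  rw [hSub, div_right_comm, mul_div_cancel_right₀ _ (pow_ne_zero 2 (uSub_pos hd hlam).ne')]

lemma hSub_mul_div_uSub_sq (hd : 0 < d) (al h' : ℝ) (hlam : 0 < lam) :
    hSub d al lam * h' / uSub d lam ^ 2 = 2 * lam ^ al * h' / (1 + lam ^ al) := by
  rw [mul_div_right_comm, hSub_div_uSub_sq hd al hlam, div_mul_eq_mul_div]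

lemma one_sub_two_mul_mul_div_one_add {a : ℝ} (ha : 1 + a ≠ 0) (h' : ℝ) :
    1 - 2 * a * h' / (1 + a) = (1 + (1 - 2 * h') * a) / (1 + a) := by
  field_simp
  ring

lemma gfun_uSub_hSub_mul (hd : 0 < d) (al h' : ℝ) (hlam : 0 < lam) :
    gfun lam al (uSub d lam) (hSub d al lam * h') =
      min (max (capHeight (h' * (1 - h')) (1 - 2 * h') (lam ^ al)) 0) 2 := by
  have hu := (uSub_pos hd hlam).ne'
  have h1a : 1 + lam ^ al ≠ 0 := (add_pos one_pos (rpow_pos_of_pos hlam al)).ne'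
  have hnum : lam ^ al / uSub d lam ^ 2 * (hSub d al lam * h') -
      1 / 2 * (1 + lam ^ al) / uSub d lam ^ 4 * (hSub d al lam * h') ^ 2 =
      lam ^ al * (hSub d al lam * h' / uSub d lam ^ 2) -
      1 / 2 * (1 + lam ^ al) * (hSub d al lam * h' / uSub d lam ^ 2) ^ 2 := by
    field_simp
  rw [gfun, hnum, hSub_mul_div_uSub_sq hd al h' hlam, one_sub_two_mul_mul_div_one_add h1a,
    capHeight]
  congr 2
  field_simp

lemma hSub_mul_phi_eq_scaledPhi (hd : 2 ≤ d) (al h' : ℝ) (hlam : 0 < lam)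
    (hcap : capHeight (h' * (1 - h')) (1 - 2 * h') (lam ^ al) ∈ Set.Icc 0 2) :
    hSub d al lam * phi d lam al (uSub d lam) (hSub d al lam * h') =
      scaledPhi d (h' * (1 - h')) (1 - 2 * h') (lam ^ al) := by
  have hd0 : 0 < d := by omega
  have hu := (uSub_pos hd0 hlam).ne'
  have ha := rpow_pos_of_pos hlam al
  have h1a : 1 + lam ^ al ≠ 0 := (add_pos one_pos ha).ne'
  have hκ := (kappa_pos d).ne'
  have hupow : uSub d lam ^ (d + 1) = uSub d lam ^ 2 * (lam / (d * kappa d)) := by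
    rw [← uSub_pow_sub_one hd hlam, ← pow_add]
    congr 1
    omega
  rw [phi, gfun_uSub_hSub_mul hd0 al h' hlam, max_eq_left hcap.1, min_eq_left hcap.2,
    hSub_mul_div_uSub_sq hd0 al h' hlam, one_sub_two_mul_mul_div_one_add h1a, div_pow, hupow,
    mul_comm (d : ℝ) al, rpow_mul_natCast hlam.le, scaledPhi, hSub]
  obtain ⟨n, rfl⟩ : ∃ n, d = n + 1 := ⟨d - 1, by omega⟩
  rw [Nat.add_sub_cancel, pow_succ, pow_succ]
  field_simp
  ring

end Scaling

lemma tendsto_rpow_atTop_nhdsGT_zero {y : ℝ} (hy : y < 0) :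
    Tendsto (fun x : ℝ => x ^ y) atTop (𝓝[>] 0) := by
  refine tendsto_nhdsWithin_iff.2 ⟨?_, ?_⟩
  · simpa using tendsto_rpow_neg_atTop (neg_pos.2 hy)
  · filter_upwards [eventually_gt_atTop 0] with x hx
    exact rpow_pos_of_pos hx y

lemma eventually_hSub_mul_phi_eq_scaledPhi {d : ℕ} (hd : 2 ≤ d) {al : ℝ} (hal : al < 0) {h' : ℝ}
    (h'0 : 0 ≤ h') (h'1 : h' ≤ 1) :
    ∀ᶠ lam in atTop, hSub d al lam * phi d lam al (uSub d lam) (hSub d al lam * h') =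
      scaledPhi d (h' * (1 - h')) (1 - 2 * h') (lam ^ al) := by
  have ha := (tendsto_nhdsWithin_iff.1 (tendsto_rpow_atTop_nhdsGT_zero hal)).1
  have hcap : Tendsto (fun lam : ℝ => capHeight (h' * (1 - h')) (1 - 2 * h') (lam ^ al)) atTop
      (𝓝 0) := by
    have h := (continuousAt_capHeight (h' * (1 - h')) (1 - 2 * h')).tendsto.comp ha
    rwa [capHeight, zero_pow two_ne_zero, mul_zero, zero_div] at h
  have hden : Tendsto (fun lam : ℝ => 1 + (1 - 2 * h') * lam ^ al) atTop (𝓝 1) := by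
    simpa using (ha.const_mul (1 - 2 * h')).const_add 1
  filter_upwards [eventually_gt_atTop 0, hcap.eventually_lt_const two_pos,
    hden.eventually_const_lt one_pos] with lam hlam hcap2 hden0
  refine hSub_mul_phi_eq_scaledPhi hd al h' hlam ⟨?_, hcap2.le⟩
  exact div_nonneg (by have := sub_nonneg.2 h'1; positivity) hden0.le

/-- for `α < -2/(d-1)`, `u_λ = (d κ_d)^{-1/(d-1)} λ^{1/(d-1)}` and
`h_λ = 2 λ^α u_λ²/(1+λ^α)`, for every fixed `h' ∈ (0,1)` one has
`h_λ φ_{λ,α,u_λ}(h_λ h') → (2^d κ_{d-1}/κ_d) (h'(1-h'))^{(d-1)/2}`. -/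
theorem phi_limit_subcritical_extreme (d : ℕ) (hd : 2 ≤ d) (al : ℝ)
    (hal : al < -2 / ((d : ℝ) - 1)) (h' : ℝ) (h'0 : 0 < h') (h'1 : h' < 1) :
    Tendsto (fun lam : ℝ => hSub d al lam * phi d lam al (uSub d lam) (hSub d al lam * h'))
      atTop
      (nhds ((2 : ℝ) ^ d * kappa (d - 1) / kappa d * (h' * (1 - h')) ^ (((d : ℝ) - 1) / 2))) := by
  have hal0 : al < 0 := by
    have : (1 : ℝ) < d := by exact_mod_cast hd
    exact hal.trans (div_neg_of_neg_of_pos (by norm_num) (by linarith))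
  have hlim := (tendsto_scaledPhi hd (mul_pos h'0 (sub_pos.2 h'1)) (1 - 2 * h')).comp
    (tendsto_rpow_atTop_nhdsGT_zero hal0)
  exact hlim.congr' ((eventually_hSub_mul_phi_eq_scaledPhi hd hal0 h'0.le h'1.le).mono
    fun _ h => h.symm)
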